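/- arXiv:0907.3401 — 2 statements merged into one kernel-verified Lean document; each statement's English description precedes it below -/
import Mathlib

section
/- For any positive integer n, the least common multiple of the numbers 1·C(n,1), 2·C(n,2), ..., n·C(n,n) equals the least common multiple of 1, 2, ..., n; that is, lcm{k·C(n,k) : 1 ≤ k ≤ n} = lcm(1, 2, ..., n). -/
/-!
Kummer's theorem says that `v_p (C(n, k))` counts the carries in the base-`p` addition
`k + (n - k)`, one for each `i ≤ log_p n` with `p ^ i ≤ k % p ^ i + (n - k) % p ^ i`. No carry
occurs at the first `v_p k` digits, where `k` vanishes, so `v_p (k * C(n, k)) ≤ log_p n`, i.e.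
every prime power dividing `k * C(n, k)` is at most `n` and hence divides `lcm(1, …, n)`.
Conversely `k ∣ k * C(n, k)`.
-/

open Finset

namespace Nat

theorem factorization_choose_add_factorization_le_log {p n k : ℕ} (hp : p.Prime) (hk : k ≠ 0)
    (hkn : k ≤ n) : (n.choose k).factorization p + k.factorization p ≤ log p n := by
  have : Fact p.Prime := ⟨hp⟩
  set a := k.factorization p
  have hpa : p ^ a ∣ k := ordProj_dvd k p
  have ha : a ≤ log p n := le_log_of_pow_le hp.one_lt ((le_of_dvd (by omega) hpa).trans hkn)
  have hcarries : {i ∈ Ico 1 (log p n + 1) | p ^ i ≤ k % p ^ i + (n - k) % p ^ i}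
      ⊆ Ico (a + 1) (log p n + 1) := by
    intro i hi
    simp only [mem_filter, mem_Ico] at hi ⊢
    refine ⟨?_, hi.1.2⟩
    by_contra hia
    have hmod : k % p ^ i = 0 := mod_eq_zero_of_dvd ((pow_dvd_pow p (by omega)).trans hpa)
    have := mod_lt (n - k) (pow_pos hp.pos i)
    omega
  have := card_le_card hcarries
  rw [card_Ico, ← padicValNat_choose hkn (lt_add_one _), ← factorization_def _ hp] at this
  omega

theorem factorization_mul_choose_le_log {p n k : ℕ} (hk : k ≠ 0) (hkn : k ≤ n) :
    (k * n.choose k).factorization p ≤ log p n := by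
  by_cases hp : p.Prime
  · rw [factorization_mul hk (choose_pos hkn).ne', Finsupp.add_apply, add_comm]
    exact factorization_choose_add_factorization_le_log hp hk hkn
  · simp [factorization_eq_zero_of_not_prime _ hp]

theorem mul_choose_dvd_lcm_Icc {n k : ℕ} (hk : k ≠ 0) (hkn : k ≤ n) :
    k * n.choose k ∣ (Icc 1 n).lcm id := by
  rw [dvd_iff_prime_pow_dvd_dvd]
  intro p j hp hdvd
  have hj : j ≤ log p n := by
    have := (hp.pow_dvd_iff_le_factorization (mul_ne_zero hk (choose_pos hkn).ne')).mp hdvd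
    exact this.trans (factorization_mul_choose_le_log hk hkn)
  have hpj : p ^ j ≤ n := pow_le_of_le_log (by omega) hj
  exact dvd_lcm (mem_Icc.mpr ⟨one_le_pow _ _ hp.pos, hpj⟩)

end Nat

theorem nair_identity_general (n : ℕ) :
    (Finset.Icc 1 n).lcm (fun k => k * n.choose k) = (Finset.Icc 1 n).lcm id := by
  apply Nat.dvd_antisymm
  · refine Finset.lcm_dvd fun k hk => ?_
    obtain ⟨hk1, hkn⟩ := Finset.mem_Icc.mp hk
    exact Nat.mul_choose_dvd_lcm_Icc (by omega) hkn
  · exact Finset.lcm_dvd fun k hk => (dvd_mul_right k _).trans (Finset.dvd_lcm hk)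

theorem nair_identity (n : ℕ) (hn : 0 < n) :
    (Finset.Icc 1 n).lcm (fun k => k * n.choose k) = (Finset.Icc 1 n).lcm id :=
  nair_identity_general n
end

section
/- For any nonnegative integer n, the least common multiple of the binomial coefficients C(n,0), C(n,1), ..., C(n,n) equals lcm(1, 2, ..., n+1) divided by n+1; that is, lcm{C(n,k) : 0 ≤ k ≤ n} = lcm(1, 2, ..., n+1)/(n+1). Equivalently, (n+1)·lcm{C(n,k) : 0 ≤ k ≤ n} = lcm(1, 2, ..., n+1). -/
/-!
Since `(n + 1) * C(n, k) = (k + 1) * C(n + 1, k + 1)`, the identity says that the numbers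
`m * C(N, m)`, `1 ≤ m ≤ N`, have the same lcm as `1, …, N`. Each `m` divides `m * C(N, m)`, and
conversely `m * C(N, m)` divides `lcm(1, …, N)` (Nair): by Kummer's theorem, `C(N, m)` has
`p`-adic valuation the number of carries when adding `m` and `N - m` in base `p`; no carry occurs
in the lowest `v_p(m)` digits, so `v_p(m * C(N, m)) ≤ log_p N = v_p(lcm(1, …, N))`.
-/

open Nat Finset

theorem padicValNat_mul_choose_le_log {p n k : ℕ} [Fact p.Prime] (hk : 0 < k) (hkn : k ≤ n) :
    padicValNat p (k * n.choose k) ≤ log p n := by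
  rw [padicValNat.mul hk.ne' (choose_ne_zero hkn), padicValNat_choose hkn (lt_add_one _)]
  set v := padicValNat p k
  have hv : v ≤ log p n := (padicValNat_le_nat_log k).trans (log_mono_right hkn)
  have carries_above_v : {i ∈ Ico 1 (log p n + 1) | p ^ i ≤ k % p ^ i + (n - k) % p ^ i} ⊆
      Ico (v + 1) (log p n + 1) := by
    intro i hi
    simp only [mem_filter, mem_Ico] at hi ⊢
    refine ⟨?_, hi.1.2⟩
    by_contra! hiv
    have hki : k % p ^ i = 0 :=
      mod_eq_zero_of_dvd ((pow_dvd_pow p (by omega)).trans pow_padicValNat_dvd)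
    have := mod_lt (n - k) (pow_pos (Fact.out : p.Prime).pos i)
    omega
  have := card_le_card carries_above_v
  rw [card_Ico] at this
  omega

theorem mul_choose_dvd_lcmUpto {n k : ℕ} (hk : 0 < k) (hkn : k ≤ n) :
    k * n.choose k ∣ lcmUpto n := by
  rw [← factorization_le_iff_dvd (mul_ne_zero hk.ne' (choose_ne_zero hkn)) (lcmUpto_ne_zero n)]
  intro p
  by_cases hp : p.Prime
  · have : Fact p.Prime := ⟨hp⟩
    rw [factorization_def _ hp, factorization_lcmUpto n hp]
    exact padicValNat_mul_choose_le_log hk hkn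
  · simp [factorization_eq_zero_of_not_prime _ hp]

theorem add_one_dvd_add_one_mul_choose (n k : ℕ) : k + 1 ∣ (n + 1) * n.choose k :=
  Dvd.intro_left _ (add_one_mul_choose_eq n k).symm

theorem farhi_identity (n : ℕ) :
    (Finset.range (n + 1)).lcm n.choose = (Finset.Icc 1 (n + 1)).lcm id / (n + 1) := by
  change _ = lcmUpto (n + 1) / (n + 1)
  have hn : n + 1 ∣ lcmUpto (n + 1) := dvd_lcm (right_mem_Icc.2 (le_add_left 1 n))
  apply dvd_antisymm
  · refine Finset.lcm_dvd fun k hk => ?_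
    rw [Nat.dvd_div_iff_mul_dvd hn, add_one_mul_choose_eq, mul_comm]
    exact mul_choose_dvd_lcmUpto k.succ_pos (by simpa using hk)
  · rw [Nat.div_dvd_iff_dvd_mul hn n.succ_pos]
    refine Finset.lcm_dvd fun m hm => ?_
    obtain ⟨k, rfl⟩ : ∃ k, m = k + 1 := exists_eq_add_one.2 (mem_Icc.1 hm).1
    exact (add_one_dvd_add_one_mul_choose n k).trans
      (mul_dvd_mul_left _ (dvd_lcm (by simpa using (mem_Icc.1 hm).2)))
end
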